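/- arXiv:2503.16900 — 2 statements merged into one kernel-verified Lean document; each statement's English description precedes it below -/
import Mathlib

section
/- Let 𝒫 be a transposed Poisson superalgebra over 𝕂. Then for all homogeneous h, x, y, z ∈ 𝒫: (-1)^{|x||z|}[h·[x,y], z] + (-1)^{|x||y|}[h·[y,z], x] + (-1)^{|y||z|}[h·[z,x], y] = 0. -/
/-- Sign function: `sgn K p = (-1)^p` for a parity `p : ZMod 2`. -/
def sgn (K : Type*) [Field K] : ZMod 2 → K := fun p => if p = 0 then 1 else -1

/-!
Write `J_h(x, y, z)` for the signed cyclic sum of `[h·[x,y], z]`. Bracketing the compatibility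
identity for `h·[x,y]` with `z` expresses `2 J_h(x, y, z)` through the double brackets
`[[h·x, y], z]`, `[[z, h·x], y]` and their cyclic shifts. The super-Jacobi identity for
`(h·x, y, z)` trades this pair for `[[y,z], h·x]`, and compatibility for `h·[[y,z], x]` turns that
into `[h·[y,z], x] - 2 h·[[y,z], x]`. Summing cyclically gives `2 J_h = J_h - 2 h·J`, where `J = 0`
is the Jacobiator of `(x, y, z)`; hence `J_h = 0`.
-/

section Sign

variable {K : Type*} [Field K]

theorem sgn_add (a b : ZMod 2) : sgn K (a + b) = sgn K a * sgn K b := by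
  obtain rfl | rfl : a = 0 ∨ a = 1 := by revert a; decide
  all_goals obtain rfl | rfl : b = 0 ∨ b = 1 := by revert b; decide
  all_goals simp +decide [sgn]

theorem sgn_mul_self (a : ZMod 2) : sgn K a * sgn K a = 1 := by
  unfold sgn
  split_ifs <;> simp

end Sign

section TransposedPoisson

variable {K : Type*} [Field K] {P : Type*} [AddCommGroup P] [Module K P]
  {H : ZMod 2 → Submodule K P} {m br : P →ₗ[K] P →ₗ[K] P}

theorem two_smul_br_mul_br
    (hcomp : ∀ (p q r : ZMod 2) (x y z : P), x ∈ H p → y ∈ H q → z ∈ H r →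
      (2 : K) • m z (br x y) = br (m z x) y + sgn K (p * r) • br x (m z y))
    {s p q : ZMod 2} {h x y : P} (hh : h ∈ H s) (hx : x ∈ H p) (hy : y ∈ H q) (z : P) :
    (2 : K) • br (m h (br x y)) z =
      br (br (m h x) y) z + sgn K (p * s) • br (br x (m h y)) z := by
  simpa using congr(br $(hcomp p q s x y h hx hy hh) z)

theorem sgn_smul_br_br_mul_add
    (hmH : ∀ (p q : ZMod 2) (x y : P), x ∈ H p → y ∈ H q → m x y ∈ H (p + q))
    (hbrH : ∀ (p q : ZMod 2) (x y : P), x ∈ H p → y ∈ H q → br x y ∈ H (p + q))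
    (hjac : ∀ (p q r : ZMod 2) (x y z : P), x ∈ H p → y ∈ H q → z ∈ H r →
      sgn K (p * r) • br (br x y) z + sgn K (p * q) • br (br y z) x +
        sgn K (q * r) • br (br z x) y = 0)
    (hcomp : ∀ (p q r : ZMod 2) (x y z : P), x ∈ H p → y ∈ H q → z ∈ H r →
      (2 : K) • m z (br x y) = br (m z x) y + sgn K (p * r) • br x (m z y))
    {s p q r : ZMod 2} {h x y z : P} (hh : h ∈ H s) (hx : x ∈ H p) (hy : y ∈ H q)
    (hz : z ∈ H r) :
    sgn K (p * r) • br (br (m h x) y) z + (sgn K (q * r) * sgn K (r * s)) • br (br z (m h x)) y =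
      sgn K (p * q) • (br (m h (br y z)) x - (2 : K) • m h (br (br y z) x)) := by
  have jac := hjac _ _ _ _ _ _ (hmH _ _ _ _ hh hx) hy hz
  have comp := hcomp _ _ _ _ _ _ (hbrH _ _ _ _ hy hz) hx hh
  linear_combination (norm := skip) sgn K (s * r) • jac + sgn K (p * q) • comp
  match_scalars <;> ring_nf <;> grind [sgn_add, sgn_mul_self]

end TransposedPoisson

theorem stmt1_general
    {K : Type*} [Field K]
    {P : Type*} [AddCommGroup P] [Module K P]
    -- ℤ₂-grading: `H p` is the subspace of homogeneous elements of parity `p`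
    (H : ZMod 2 → Submodule K P)
    -- the associative supercommutative product `m` and the Lie superbracket `br`
    (m br : P →ₗ[K] P →ₗ[K] P)
    (hmH : ∀ (p q : ZMod 2) (x y : P), x ∈ H p → y ∈ H q → m x y ∈ H (p + q))
    (hbrH : ∀ (p q : ZMod 2) (x y : P), x ∈ H p → y ∈ H q → br x y ∈ H (p + q))
    (hjac : ∀ (p q r : ZMod 2) (x y z : P), x ∈ H p → y ∈ H q → z ∈ H r →
      sgn K (p * r) • br (br x y) z + sgn K (p * q) • br (br y z) x +
        sgn K (q * r) • br (br z x) y = 0)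
    (hcomp : ∀ (p q r : ZMod 2) (x y z : P), x ∈ H p → y ∈ H q → z ∈ H r →
      (2 : K) • m z (br x y) = br (m z x) y + sgn K (p * r) • br x (m z y)) :
    ∀ (s p q r : ZMod 2) (h x y z : P), h ∈ H s → x ∈ H p → y ∈ H q → z ∈ H r →
      sgn K (p * r) • br (m h (br x y)) z + sgn K (p * q) • br (m h (br y z)) x +
        sgn K (q * r) • br (m h (br z x)) y = 0 := by
  intro s p q r h x y z hh hx hy hz
  have hJ : sgn K (p * r) • m h (br (br x y) z) + sgn K (p * q) • m h (br (br y z) x) +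
      sgn K (q * r) • m h (br (br z x) y) = 0 := by
    simpa using congr(m h $(hjac p q r x y z hx hy hz))
  have e₁ := two_smul_br_mul_br hcomp hh hx hy z
  have e₂ := two_smul_br_mul_br hcomp hh hy hz x
  have e₃ := two_smul_br_mul_br hcomp hh hz hx y
  have f₁ := sgn_smul_br_br_mul_add hmH hbrH hjac hcomp hh hx hy hz
  have f₂ := sgn_smul_br_br_mul_add hmH hbrH hjac hcomp hh hy hz hx
  have f₃ := sgn_smul_br_br_mul_add hmH hbrH hjac hcomp hh hz hx hy
  linear_combination (norm := skip) sgn K (p * r) • e₁ + sgn K (p * q) • e₂ +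
    sgn K (q * r) • e₃ + f₁ + f₂ + f₃ - (2 : K) • hJ
  match_scalars <;> ring_nf

theorem stmt1
    {K : Type*} [Field K] [CharZero K]
    {P : Type*} [AddCommGroup P] [Module K P]
    -- ℤ₂-grading: `H p` is the subspace of homogeneous elements of parity `p`
    (H : ZMod 2 → Submodule K P)
    (hgrade : DirectSum.IsInternal H)
    -- the associative supercommutative product `m` and the Lie superbracket `br`
    (m br : P →ₗ[K] P →ₗ[K] P)
    (hmH : ∀ (p q : ZMod 2) (x y : P), x ∈ H p → y ∈ H q → m x y ∈ H (p + q))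
    (hbrH : ∀ (p q : ZMod 2) (x y : P), x ∈ H p → y ∈ H q → br x y ∈ H (p + q))
    (hassoc : ∀ x y z : P, m (m x y) z = m x (m y z))
    (hcomm : ∀ (p q : ZMod 2) (x y : P), x ∈ H p → y ∈ H q →
      m x y = sgn K (p * q) • m y x)
    (hskew : ∀ (p q : ZMod 2) (x y : P), x ∈ H p → y ∈ H q →
      br x y = -(sgn K (p * q) • br y x))
    (hjac : ∀ (p q r : ZMod 2) (x y z : P), x ∈ H p → y ∈ H q → z ∈ H r →
      sgn K (p * r) • br (br x y) z + sgn K (p * q) • br (br y z) x +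
        sgn K (q * r) • br (br z x) y = 0)
    (hcomp : ∀ (p q r : ZMod 2) (x y z : P), x ∈ H p → y ∈ H q → z ∈ H r →
      (2 : K) • m z (br x y) = br (m z x) y + sgn K (p * r) • br x (m z y)) :
    ∀ (s p q r : ZMod 2) (h x y z : P), h ∈ H s → x ∈ H p → y ∈ H q → z ∈ H r →
      sgn K (p * r) • br (m h (br x y)) z + sgn K (p * q) • br (m h (br y z)) x +
        sgn K (q * r) • br (m h (br z x)) y = 0 :=
  stmt1_general H m br hmH hbrH hjac hcomp
end

section
/- Let A = A₀ ⊕ A₁ be a supercommutative associative 𝕂-algebra and δ : A → A an odd derivation with δ² = 0. Define β(x,y) = x δ(y) + (-1)^{(|x|+1)(|y|+1)} y δ(x) on homogeneous x, y. Then for all x ∈ A₁ and y, z ∈ A₀ the Jordan module identity holds: β(β(β(x,x), y), z) - β(β(x,x), β(y,z)) = 2 β(β(x,y), β(x,z)) - 2 β(x, β(y, β(x,z))). (This says that the odd vector fields {y·δ : y ∈ A₀} form a Jordan module over the Jordan algebra of even vector fields {x·δ : x ∈ A₁}.) -/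
/-- `β(x,y) = x δ(y) + (-1)^{(|x|+1)(|y|+1)} y δ(x)` on homogeneous elements,
with the parities given as explicit arguments: the coefficient of the bracket
`{x·δ, y·δ}` of the vector fields `x·δ`, `y·δ`. -/
def betab {K : Type*} [Field K] {A : Type*} [NonUnitalRing A] [Module K A]
    (δ : A →ₗ[K] A) (x : A) (p : ZMod 2) (y : A) (q : ZMod 2) : A :=
  x * δ y + sgn K ((p + 1) * (q + 1)) • (y * δ x)

/-!
Moving `δ u` to the left turns the bracket into `β(u,v) = u δv - (-1)^{|u|} δu v`,
and `δ² = 0` collapses `δ` of every bracket to a single monomial, `δ β(u,v) = 2 δu δv`.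
Hence for odd `X` the left-hand side `β(β(X,y),z) - β(X,β(y,z))` is just
`-X δy δz - δX δy z`. With `X = β(x,x) = 2 x δx` both sides become combinations of the
same few monomials in `x, δx, δy, δz, z`, and they agree once these are reordered by
supercommutativity (`δx` is even, `x` and `δy` are odd).
-/

section

variable {K : Type*} [Field K] {A : Type*} [NonUnitalRing A] [Module K A]

@[simp] theorem sgn_zero : sgn K 0 = 1 := rfl

@[simp] theorem sgn_one : sgn K 1 = -1 := by simp [sgn]

theorem ZMod.eq_zero_or_eq_one_of_two (p : ZMod 2) : p = 0 ∨ p = 1 := by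
  revert p; decide

structure IsSupercommutative (H : ZMod 2 → Submodule K A) : Prop where
  mul_mem : ∀ (p q : ZMod 2) (x y : A), x ∈ H p → y ∈ H q → x * y ∈ H (p + q)
  mul_comm : ∀ (p q : ZMod 2) (x y : A), x ∈ H p → y ∈ H q →
    x * y = sgn K (p * q) • (y * x)

structure IsOddDifferential (H : ZMod 2 → Submodule K A) (δ : A →ₗ[K] A) : Prop where
  map_mem : ∀ (p : ZMod 2) (x : A), x ∈ H p → δ x ∈ H (p + 1)
  leibniz : ∀ (p : ZMod 2) (x : A), x ∈ H p → ∀ y : A,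
    δ (x * y) = δ x * y + sgn K p • (x * δ y)
  map_map : ∀ a : A, δ (δ a) = 0

variable {H : ZMod 2 → Submodule K A} {δ : A →ₗ[K] A} {u v : A} {p q : ZMod 2}

namespace IsSupercommutative

theorem commute_of_mem_zero (hH : IsSupercommutative H) (hu : u ∈ H 0) (hv : v ∈ H q) :
    Commute u v := by
  show u * v = v * u
  simpa using hH.mul_comm 0 q u v hu hv

theorem mul_comm_of_mem_one (hH : IsSupercommutative H) (hu : u ∈ H 1) (hv : v ∈ H 1) :
    u * v = -(v * u) := by
  simpa using hH.mul_comm 1 1 u v hu hv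

end IsSupercommutative

namespace IsOddDifferential

theorem map_mul_map (hδ : IsOddDifferential H δ) (hu : u ∈ H p) :
    δ (u * δ v) = δ u * δ v := by
  rw [hδ.leibniz p u hu, hδ.map_map, mul_zero, smul_zero, add_zero]

theorem betab_mem (hH : IsSupercommutative H) (hδ : IsOddDifferential H δ) (hu : u ∈ H p)
    (hv : v ∈ H q) : betab δ u p v q ∈ H (p + q + 1) := by
  refine add_mem ?_ (Submodule.smul_mem _ _ ?_)
  · rw [add_assoc]
    exact hH.mul_mem _ _ _ _ hu (hδ.map_mem q v hv)
  · rw [show p + q + 1 = q + (p + 1) by ring]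
    exact hH.mul_mem _ _ _ _ hv (hδ.map_mem p u hu)

theorem betab_eq_sub (hH : IsSupercommutative H) (hδ : IsOddDifferential H δ)
    (hu : u ∈ H p) (hv : v ∈ H q) : betab δ u p v q = u * δ v - sgn K p • (δ u * v) := by
  rw [betab, hH.mul_comm q (p + 1) v (δ u) hv (hδ.map_mem p u hu), smul_smul, sub_eq_add_neg,
    ← neg_smul]
  congr 2
  rcases p.eq_zero_or_eq_one_of_two with rfl | rfl <;>
    rcases q.eq_zero_or_eq_one_of_two with rfl | rfl <;> simp +decide [sgn]

theorem betab_of_mem_zero (hH : IsSupercommutative H) (hδ : IsOddDifferential H δ)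
    (hu : u ∈ H 0) (hv : v ∈ H q) :
    betab δ u 0 v q = u * δ v - δ u * v := by
  simpa using hδ.betab_eq_sub hH hu hv

theorem betab_of_mem_one (hH : IsSupercommutative H) (hδ : IsOddDifferential H δ)
    (hu : u ∈ H 1) (hv : v ∈ H q) :
    betab δ u 1 v q = u * δ v + δ u * v := by
  simpa using hδ.betab_eq_sub hH hu hv

theorem map_betab (hH : IsSupercommutative H) (hδ : IsOddDifferential H δ)
    (hu : u ∈ H p) (hv : v ∈ H q) : δ (betab δ u p v q) = (2 : K) • (δ u * δ v) := by
  have hsgn : sgn K p * sgn K (p + 1) = -1 := by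
    rcases p.eq_zero_or_eq_one_of_two with rfl | rfl <;> simp +decide [sgn]
  rw [hδ.betab_eq_sub hH hu hv, map_sub, map_smul, hδ.map_mul_map hu,
    hδ.leibniz (p + 1) (δ u) (hδ.map_mem p u hu), hδ.map_map, zero_mul, zero_add, smul_smul,
    hsgn]
  module

theorem betab_betab_sub_betab_betab [SMulCommClass K A A] [IsScalarTower K A A]
    (hH : IsSupercommutative H) (hδ : IsOddDifferential H δ) {X y z : A} (hX : X ∈ H 1)
    (hy : y ∈ H 0) (hz : z ∈ H 0) :
    betab δ (betab δ X 1 y 0) 0 z 0 - betab δ X 1 (betab δ y 0 z 0) 1 =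
      -(X * (δ y * δ z)) - δ X * (δ y * z) := by
  have hXy : betab δ X 1 y 0 ∈ H 0 := hδ.betab_mem hH hX hy
  have hyz : betab δ y 0 z 0 ∈ H 1 := hδ.betab_mem hH hy hz
  rw [hδ.betab_of_mem_zero hH hXy hz, hδ.map_betab hH hX hy, hδ.betab_of_mem_one hH hX hy,
    hδ.betab_of_mem_one hH hX hyz, hδ.map_betab hH hy hz, hδ.betab_of_mem_zero hH hy hz]
  simp only [add_mul, mul_sub, smul_mul_assoc, mul_smul_comm, mul_assoc]
  module

theorem two_smul_betab_betab_sub_two_smul_betab_betab [SMulCommClass K A A]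
    [IsScalarTower K A A] (hH : IsSupercommutative H) (hδ : IsOddDifferential H δ) {x y z : A}
    (hx : x ∈ H 1) (hy : y ∈ H 0) (hz : z ∈ H 0) :
    (2 : K) • betab δ (betab δ x 1 y 0) 0 (betab δ x 1 z 0) 0 -
        (2 : K) • betab δ x 1 (betab δ y 0 (betab δ x 1 z 0) 0) 1 =
      -(4 : K) • (x * (δ y * (δ x * δ z))) - (2 : K) • (δ x * (δ y * (x * δ z))) -
        (2 : K) • (δ x * (δ y * (δ x * z))) := by
  have hxy : betab δ x 1 y 0 ∈ H 0 := hδ.betab_mem hH hx hy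
  have hxz : betab δ x 1 z 0 ∈ H 0 := hδ.betab_mem hH hx hz
  have hyxz : betab δ y 0 (betab δ x 1 z 0) 0 ∈ H 1 := hδ.betab_mem hH hy hxz
  rw [hδ.betab_of_mem_zero hH hxy hxz, hδ.betab_of_mem_one hH hx hyxz, hδ.map_betab hH hy hxz,
    hδ.betab_of_mem_zero hH hy hxz, hδ.map_betab hH hx hz, hδ.map_betab hH hx hy,
    hδ.betab_of_mem_one hH hx hy, hδ.betab_of_mem_one hH hx hz]
  simp only [mul_add, add_mul, mul_sub, smul_mul_assoc, mul_smul_comm, mul_assoc]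
  module

end IsOddDifferential

end

theorem stmt11_general
    {K : Type*} [Field K]
    {A : Type*} [NonUnitalRing A] [Module K A] [SMulCommClass K A A] [IsScalarTower K A A]
    -- ℤ₂-grading: `H p` is the subspace of homogeneous elements of parity `p`
    (H : ZMod 2 → Submodule K A)
    (hmulH : ∀ (p q : ZMod 2) (x y : A), x ∈ H p → y ∈ H q → x * y ∈ H (p + q))
    (hcomm : ∀ (p q : ZMod 2) (x y : A), x ∈ H p → y ∈ H q →
      x * y = sgn K (p * q) • (y * x))
    -- an odd derivation `δ`
    (δ : A →ₗ[K] A)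
    (hδH : ∀ (p : ZMod 2) (x : A), x ∈ H p → δ x ∈ H (p + 1))
    (hLeib : ∀ (p : ZMod 2) (x : A), x ∈ H p → ∀ y : A,
      δ (x * y) = δ x * y + sgn K p • (x * δ y))
    (hδ2 : ∀ a : A, δ (δ a) = 0) :
    ∀ x y z : A, x ∈ H 1 → y ∈ H 0 → z ∈ H 0 →
      betab δ (betab δ (betab δ x 1 x 1) 1 y 0) 0 z 0 -
        betab δ (betab δ x 1 x 1) 1 (betab δ y 0 z 0) 1 =
      (2 : K) • betab δ (betab δ x 1 y 0) 0 (betab δ x 1 z 0) 0 -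
        (2 : K) • betab δ x 1 (betab δ y 0 (betab δ x 1 z 0) 0) 1 := by
  intro x y z hx hy hz
  have hH : IsSupercommutative H := ⟨hmulH, hcomm⟩
  have hδ : IsOddDifferential H δ := ⟨hδH, hLeib, hδ2⟩
  have hδx : δ x ∈ H 0 := hδ.map_mem 1 x hx
  have hδy : δ y ∈ H 1 := hδ.map_mem 0 y hy
  have hδx_x : Commute (δ x) x := hH.commute_of_mem_zero hδx hx
  have hδx_δy : Commute (δ x) (δ y) := hH.commute_of_mem_zero hδx hδy
  have hδy_x : δ y * x = -(x * δ y) := hH.mul_comm_of_mem_one hδy hx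
  rw [hδ.betab_betab_sub_betab_betab hH (hδ.betab_mem hH hx hx) hy hz,
    hδ.two_smul_betab_betab_sub_two_smul_betab_betab hH hx hy hz, hδ.map_betab hH hx hx,
    hδ.betab_of_mem_one hH hx hx, hδx_x.eq]
  simp only [add_mul, smul_mul_assoc, mul_assoc, hδx_δy.symm.left_comm, hδx_x.left_comm,
    ← mul_assoc (δ y) x, hδy_x, neg_mul, mul_neg]
  module

theorem stmt11
    {K : Type*} [Field K] [CharZero K]
    {A : Type*} [NonUnitalRing A] [Module K A] [SMulCommClass K A A] [IsScalarTower K A A]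
    -- ℤ₂-grading: `H p` is the subspace of homogeneous elements of parity `p`
    (H : ZMod 2 → Submodule K A)
    (hgrade : DirectSum.IsInternal H)
    (hmulH : ∀ (p q : ZMod 2) (x y : A), x ∈ H p → y ∈ H q → x * y ∈ H (p + q))
    (hcomm : ∀ (p q : ZMod 2) (x y : A), x ∈ H p → y ∈ H q →
      x * y = sgn K (p * q) • (y * x))
    -- an odd derivation `δ`
    (δ : A →ₗ[K] A)
    (hδH : ∀ (p : ZMod 2) (x : A), x ∈ H p → δ x ∈ H (p + 1))
    (hLeib : ∀ (p : ZMod 2) (x : A), x ∈ H p → ∀ y : A,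
      δ (x * y) = δ x * y + sgn K p • (x * δ y))
    (hδ2 : ∀ a : A, δ (δ a) = 0) :
    ∀ x y z : A, x ∈ H 1 → y ∈ H 0 → z ∈ H 0 →
      betab δ (betab δ (betab δ x 1 x 1) 1 y 0) 0 z 0 -
        betab δ (betab δ x 1 x 1) 1 (betab δ y 0 z 0) 1 =
      (2 : K) • betab δ (betab δ x 1 y 0) 0 (betab δ x 1 z 0) 0 -
        (2 : K) • betab δ x 1 (betab δ y 0 (betab δ x 1 z 0) 0) 1 :=
  stmt11_general H hmulH hcomm δ hδH hLeib hδ2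
end
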